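/- Let Q be a finite quasigroup quandle, n ≥ 2 and 1 ≤ j ≤ n−1. Then ∂_{n+1} ∘ F_n^j + F_{n−1}^j ∘ ∂_n = (−1)^j (f_r^j − f_s^{j−1}) as homomorphisms C_n^R(Q) → C_n^R(Q); that is, F^j is a chain homotopy showing f_s^{j−1} is chain homotopic to f_r^j. -/
import Mathlib


/-- The rack chain group `C_n^R(Q) = ℤQ^n`, the free abelian group on `n`-tuples of
elements of `Q` (modelled as finitely supported `ℤ`-valued functions on `Fin n → Q`). -/
abbrev CR (Q : Type) (n : ℕ) : Type := (Fin n → Q) →₀ ℤ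

/-- The trivial face map `d_i^{(*₀)} : C_{n+1}^R(Q) → C_n^R(Q)`; the index `i` is the paper's
1-based index, `i ∈ {1, …, n+1}`:
`d_i^{(*₀)}(x_1, …, x_{n+1}) = (x_1, …, x_{i-1}, x_{i+1}, …, x_{n+1})`. -/
noncomputable def d0 (Q : Type) (n i : ℕ) : CR Q (n+1) →ₗ[ℤ] CR Q n :=
  Finsupp.lmapDomain ℤ ℤ (fun (x : Fin (n+1) → Q) (k : Fin n) =>
    if (k : ℕ) + 1 < i then x (Fin.castSucc k) else x k.succ)

/-- The face map `d_i^{(*)} : C_{n+1}^R(Q) → C_n^R(Q)` for a binary operation `op`; the index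
`i` is the paper's 1-based index, `i ∈ {1, …, n+1}`:
`d_i^{(*)}(x_1, …, x_{n+1}) = (x_1 * x_i, …, x_{i-1} * x_i, x_{i+1}, …, x_{n+1})`. -/
noncomputable def d1 (Q : Type) (op : Q → Q → Q) (n i : ℕ) : CR Q (n+1) →ₗ[ℤ] CR Q n :=
  Finsupp.lmapDomain ℤ ℤ (fun (x : Fin (n+1) → Q) (k : Fin n) =>
    if h : (k : ℕ) + 1 < i ∧ i ≤ n + 1 then
      op (x (Fin.castSucc k)) (x ⟨i - 1, by omega⟩)
    else x k.succ)

/-- The rack boundary `∂_{n+1} = Σ_{i=1}^{n+1} (-1)^i (d_i^{(*₀)} - d_i^{(*)})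
  : C_{n+1}^R(Q) → C_n^R(Q)`. -/
noncomputable def bdry (Q : Type) (op : Q → Q → Q) (n : ℕ) : CR Q (n+1) →ₗ[ℤ] CR Q n :=
  ∑ i ∈ Finset.Icc 1 (n+1), ((-1 : ℤ)^i) • (d0 Q n i - d1 Q op n i)

/-- The repeater map `f_r^j : C_n^R(Q) → C_n^R(Q)` (paper index `1 ≤ j ≤ n`):
`f_r^j(x_1, …, x_n) = |Q| ⬝ (x_j, …, x_j, x_{j+1}, …, x_n)` with `x_j` repeated `j` times. -/
noncomputable def frj (Q : Type) [Fintype Q] (n j : ℕ) : CR Q n →ₗ[ℤ] CR Q n :=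
  Finsupp.lift (CR Q n) ℤ (Fin n → Q) (fun x =>
    (Fintype.card Q : ℤ) • Finsupp.single
      (fun k : Fin n => if h : (k : ℕ) + 1 ≤ j ∧ j ≤ n then x ⟨j - 1, by omega⟩ else x k) 1)

/-- The symmetrizer map `f_s^j : C_n^R(Q) → C_n^R(Q)` (paper index `0 ≤ j ≤ n`):
`f_s^j(x_1, …, x_n) = Σ_{y ∈ Q} (y, …, y, x_{j+1}, …, x_n)` with `y` repeated `j` times. -/
noncomputable def fsj (Q : Type) [Fintype Q] (n j : ℕ) : CR Q n →ₗ[ℤ] CR Q n :=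
  Finsupp.lift (CR Q n) ℤ (Fin n → Q) (fun x =>
    ∑ y : Q, Finsupp.single (fun k : Fin n => if (k : ℕ) + 1 ≤ j then y else x k) 1)

/-- The chain homotopy `D_n^j : C_n^R(Q) → C_{n+1}^R(Q)` (paper index `1 ≤ j ≤ n`):
`D_n^j(x_1, …, x_n) = Σ_{y ∈ Q} (x_j, …, x_j, y, x_{j+1}, …, x_n)` with `x_j` repeated
`j` times and `y` in position `j+1`. -/
noncomputable def Dnj (Q : Type) [Fintype Q] (n j : ℕ) : CR Q n →ₗ[ℤ] CR Q (n+1) :=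
  if hj : 1 ≤ j ∧ j ≤ n then
    Finsupp.lift (CR Q (n+1)) ℤ (Fin n → Q) (fun x =>
      ∑ y : Q, Finsupp.single (fun k : Fin (n+1) =>
        if h1 : (k : ℕ) + 1 ≤ j then x ⟨j - 1, by omega⟩
        else if h2 : (k : ℕ) = j then y
        else x ⟨(k : ℕ) - 1, by have := k.isLt; omega⟩) 1)
  else 0

/-- The chain homotopy `F_n^j : C_n^R(Q) → C_{n+1}^R(Q)` (paper index `1 ≤ j ≤ n`):
`F_n^j(x_1, …, x_n) = Σ_{y ∈ Q} (x_j, …, x_j, y, x_j, x_{j+1}, …, x_n)` with `x_j` repeated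
`j-1` times, `y` in position `j`, and `x_j` in position `j+1`. -/
noncomputable def Fnj (Q : Type) [Fintype Q] (n j : ℕ) : CR Q n →ₗ[ℤ] CR Q (n+1) :=
  if hj : 1 ≤ j ∧ j ≤ n then
    Finsupp.lift (CR Q (n+1)) ℤ (Fin n → Q) (fun x =>
      ∑ y : Q, Finsupp.single (fun k : Fin (n+1) =>
        if h1 : (k : ℕ) + 1 = j then y
        else if h2 : (k : ℕ) + 1 ≤ j + 1 then x ⟨j - 1, by omega⟩
        else x ⟨(k : ℕ) - 1, by have := k.isLt; omega⟩) 1)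
  else 0

section ChainHomotopyHelpers

variable {Q : Type} [Fintype Q]

lemma d0_single (n i : ℕ) (x : Fin (n+1) → Q) (b : ℤ) :
    d0 Q n i (Finsupp.single x b) =
      Finsupp.single (fun k : Fin n =>
        if (k : ℕ) + 1 < i then x (Fin.castSucc k) else x k.succ) b := by
  simp [d0, Finsupp.mapDomain_single]

lemma d1_single (op : Q → Q → Q) (n i : ℕ) (x : Fin (n+1) → Q) (b : ℤ) :
    d1 Q op n i (Finsupp.single x b) =
      Finsupp.single (fun k : Fin n =>
        if h : (k : ℕ) + 1 < i ∧ i ≤ n + 1 then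
          op (x (Fin.castSucc k)) (x ⟨i - 1, by omega⟩)
        else x k.succ) b := by
  simp [d1, Finsupp.mapDomain_single]

lemma Fnj_single (n j : ℕ) (hj1 : 1 ≤ j) (hj2 : j ≤ n) (x : Fin n → Q) (b : ℤ) :
    Fnj Q n j (Finsupp.single x b) =
      ∑ y : Q, Finsupp.single (fun k : Fin (n+1) =>
        if h1 : (k : ℕ) + 1 = j then y
        else if h2 : (k : ℕ) + 1 ≤ j + 1 then x ⟨j - 1, by omega⟩
        else x ⟨(k : ℕ) - 1, by have := k.isLt; omega⟩) b := by
  rw [Fnj, dif_pos ⟨hj1, hj2⟩, Finsupp.lift_apply,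
    Finsupp.sum_single_index (by simp), Finset.smul_sum]
  simp [Finsupp.smul_single]

lemma frj_single (n j : ℕ) (x : Fin n → Q) (b : ℤ) :
    frj Q n j (Finsupp.single x b) =
      (Fintype.card Q : ℤ) • Finsupp.single (fun k : Fin n =>
        if h : (k : ℕ) + 1 ≤ j ∧ j ≤ n then x ⟨j - 1, by omega⟩ else x k) b := by
  rw [frj, Finsupp.lift_apply, Finsupp.sum_single_index (by simp), smul_comm]
  simp [Finsupp.smul_single]

lemma fsj_single (n j : ℕ) (x : Fin n → Q) (b : ℤ) :
    fsj Q n j (Finsupp.single x b) =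
      ∑ y : Q, Finsupp.single (fun k : Fin n =>
        if (k : ℕ) + 1 ≤ j then y else x k) b := by
  rw [fsj, Finsupp.lift_apply, Finsupp.sum_single_index (by simp), Finset.smul_sum]
  simp [Finsupp.smul_single]

end ChainHomotopyHelpers

section Cases

variable {Q : Type} [Fintype Q] (op : Q → Q → Q)

lemma left_mul_bijective (hlatin : ∀ a b : Q, ∃! x : Q, op a x = b) (a : Q) :
    Function.Bijective (fun y => op a y) := by
  constructor
  · intro y1 y2 h
    obtain ⟨z, _, hu⟩ := hlatin a (op a y1)
    rw [hu y1 rfl, hu y2 h.symm]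
  · intro c
    obtain ⟨z, hz, _⟩ := hlatin a c
    exact ⟨z, hz⟩

variable (hidem : ∀ a : Q, op a a = a)
variable {m j : ℕ} (hj1 : 1 ≤ j) (hj2 : j ≤ m)
variable (x : Fin (m+1) → Q) (b : ℤ)
include hidem hj1 hj2

lemma caseA_lt {i : ℕ} (hij : i < j) :
    d0 Q (m+1) i (Fnj Q (m+1) j (Finsupp.single x b)) =
      d1 Q op (m+1) i (Fnj Q (m+1) j (Finsupp.single x b)) := by
  rw [Fnj_single (m+1) j hj1 (by omega) x b, map_sum, map_sum]
  refine Finset.sum_congr rfl fun y _ => ?_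
  rw [d0_single, d1_single]
  congr 1
  funext k
  simp only [Fin.coe_castSucc, Fin.val_succ, Fin.succ_mk, Fin.castSucc_mk]
  split_ifs <;>
    first
      | rfl
      | omega
      | exact hidem _
      | exact (hidem _).symm
      | exact congrArg x (Fin.ext (by (try simp only []); (try simp only [Fin.val_succ, Fin.coe_castSucc]); omega))
      | exact congrArg₂ op rfl (congrArg x (Fin.ext (by (try simp only []); (try simp only [Fin.val_succ, Fin.coe_castSucc]); omega)))
      | exact congrArg₂ op (congrArg x (Fin.ext (by (try simp only []); (try simp only [Fin.val_succ, Fin.coe_castSucc]); omega))) rfl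
      | exact congrArg₂ op (congrArg x (Fin.ext (by (try simp only []); (try simp only [Fin.val_succ, Fin.coe_castSucc]); omega))) (congrArg x (Fin.ext (by (try simp only []); (try simp only [Fin.val_succ, Fin.coe_castSucc]); omega)))
      | exact (congrArg₂ op (congrArg x (Fin.ext (by (try simp only []); (try simp only [Fin.val_succ, Fin.coe_castSucc]); omega))) (congrArg x (Fin.ext (by (try simp only []); (try simp only [Fin.val_succ, Fin.coe_castSucc]); omega)))).trans (hidem _)
      | exact (hidem _).symm.trans (congrArg₂ op (congrArg x (Fin.ext (by (try simp only []); (try simp only [Fin.val_succ, Fin.coe_castSucc]); omega))) (congrArg x (Fin.ext (by (try simp only []); (try simp only [Fin.val_succ, Fin.coe_castSucc]); omega))))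

lemma caseA_j :
    d0 Q (m+1) j (Fnj Q (m+1) j (Finsupp.single x b)) =
      frj Q (m+1) j (Finsupp.single x b) := by
  rw [Fnj_single (m+1) j hj1 (by omega) x b, map_sum, frj_single]
  have : ∀ y : Q, d0 Q (m+1) j (Finsupp.single (fun k : Fin (m+2) =>
        if h1 : (k : ℕ) + 1 = j then y
        else if h2 : (k : ℕ) + 1 ≤ j + 1 then x ⟨j - 1, by omega⟩
        else x ⟨(k : ℕ) - 1, by have := k.isLt; omega⟩) b) =
      Finsupp.single (fun k : Fin (m+1) =>
        if h : (k : ℕ) + 1 ≤ j ∧ j ≤ m + 1 then x ⟨j - 1, by omega⟩ else x k) b := by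
    intro y
    rw [d0_single]
    congr 1
    funext k
    simp only [Fin.coe_castSucc, Fin.val_succ, Fin.succ_mk, Fin.castSucc_mk]
    split_ifs <;>
      first
        | rfl
        | omega
        | exact hidem _
        | exact (hidem _).symm
        | exact congrArg x (Fin.ext (by (try simp only []); (try simp only [Fin.val_succ, Fin.coe_castSucc]); omega))
        | exact congrArg₂ op rfl (congrArg x (Fin.ext (by (try simp only []); (try simp only [Fin.val_succ, Fin.coe_castSucc]); omega)))
        | exact congrArg₂ op (congrArg x (Fin.ext (by (try simp only []); (try simp only [Fin.val_succ, Fin.coe_castSucc]); omega))) rfl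
        | exact congrArg₂ op (congrArg x (Fin.ext (by (try simp only []); (try simp only [Fin.val_succ, Fin.coe_castSucc]); omega))) (congrArg x (Fin.ext (by (try simp only []); (try simp only [Fin.val_succ, Fin.coe_castSucc]); omega)))
        | exact (congrArg₂ op (congrArg x (Fin.ext (by (try simp only []); (try simp only [Fin.val_succ, Fin.coe_castSucc]); omega))) (congrArg x (Fin.ext (by (try simp only []); (try simp only [Fin.val_succ, Fin.coe_castSucc]); omega)))).trans (hidem _)
        | exact (hidem _).symm.trans (congrArg₂ op (congrArg x (Fin.ext (by (try simp only []); (try simp only [Fin.val_succ, Fin.coe_castSucc]); omega))) (congrArg x (Fin.ext (by (try simp only []); (try simp only [Fin.val_succ, Fin.coe_castSucc]); omega))))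
  rw [Finset.sum_congr rfl fun y _ => this y, Finset.sum_const, Finset.card_univ,
    Nat.cast_smul_eq_nsmul]

lemma caseA_j' (hlatin : ∀ a b : Q, ∃! x : Q, op a x = b) :
    d1 Q op (m+1) j (Fnj Q (m+1) j (Finsupp.single x b)) =
      fsj Q (m+1) (j-1) (Finsupp.single x b) := by
  rw [Fnj_single (m+1) j hj1 (by omega) x b, map_sum, fsj_single]
  have key : ∀ y : Q, d1 Q op (m+1) j (Finsupp.single (fun k : Fin (m+2) =>
        if h1 : (k : ℕ) + 1 = j then y
        else if h2 : (k : ℕ) + 1 ≤ j + 1 then x ⟨j - 1, by omega⟩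
        else x ⟨(k : ℕ) - 1, by have := k.isLt; omega⟩) b) =
      Finsupp.single (fun k : Fin (m+1) =>
        if (k : ℕ) + 1 ≤ j - 1 then op (x ⟨j - 1, by omega⟩) y else x k) b := by
    intro y
    rw [d1_single]
    congr 1
    funext k
    simp only [Fin.coe_castSucc, Fin.val_succ, Fin.succ_mk, Fin.castSucc_mk]
    split_ifs <;>
      first
        | rfl
        | omega
        | exact hidem _
        | exact (hidem _).symm
        | exact congrArg x (Fin.ext (by (try simp only []); (try simp only [Fin.val_succ, Fin.coe_castSucc]); omega))
        | exact congrArg₂ op rfl (congrArg x (Fin.ext (by (try simp only []); (try simp only [Fin.val_succ, Fin.coe_castSucc]); omega)))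
        | exact congrArg₂ op (congrArg x (Fin.ext (by (try simp only []); (try simp only [Fin.val_succ, Fin.coe_castSucc]); omega))) rfl
        | exact congrArg₂ op (congrArg x (Fin.ext (by (try simp only []); (try simp only [Fin.val_succ, Fin.coe_castSucc]); omega))) (congrArg x (Fin.ext (by (try simp only []); (try simp only [Fin.val_succ, Fin.coe_castSucc]); omega)))
        | exact (congrArg₂ op (congrArg x (Fin.ext (by (try simp only []); (try simp only [Fin.val_succ, Fin.coe_castSucc]); omega))) (congrArg x (Fin.ext (by (try simp only []); (try simp only [Fin.val_succ, Fin.coe_castSucc]); omega)))).trans (hidem _)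
        | exact (hidem _).symm.trans (congrArg₂ op (congrArg x (Fin.ext (by (try simp only []); (try simp only [Fin.val_succ, Fin.coe_castSucc]); omega))) (congrArg x (Fin.ext (by (try simp only []); (try simp only [Fin.val_succ, Fin.coe_castSucc]); omega))))
  rw [Finset.sum_congr rfl fun y _ => key y]
  exact Function.Bijective.sum_comp (left_mul_bijective op hlatin (x ⟨j - 1, by omega⟩))
    (fun z => Finsupp.single (fun k : Fin (m+1) =>
      if (k : ℕ) + 1 ≤ j - 1 then z else x k) b)

lemma caseA_j1 (hinv : ∀ c : Q, Function.Bijective (fun a => op a c)) :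
    d0 Q (m+1) (j+1) (Fnj Q (m+1) j (Finsupp.single x b)) =
      d1 Q op (m+1) (j+1) (Fnj Q (m+1) j (Finsupp.single x b)) := by
  rw [Fnj_single (m+1) j hj1 (by omega) x b, map_sum, map_sum]
  have h0 : ∀ y : Q, d0 Q (m+1) (j+1) (Finsupp.single (fun k : Fin (m+2) =>
        if h1 : (k : ℕ) + 1 = j then y
        else if h2 : (k : ℕ) + 1 ≤ j + 1 then x ⟨j - 1, by omega⟩
        else x ⟨(k : ℕ) - 1, by have := k.isLt; omega⟩) b) =
      Finsupp.single (fun k : Fin (m+1) =>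
        if (k : ℕ) + 1 = j then y
        else if (k : ℕ) + 1 < j then x ⟨j - 1, by omega⟩ else x k) b := by
    intro y
    rw [d0_single]
    congr 1
    funext k
    simp only [Fin.coe_castSucc, Fin.val_succ, Fin.succ_mk, Fin.castSucc_mk]
    split_ifs <;>
      first
        | rfl
        | omega
        | exact hidem _
        | exact (hidem _).symm
        | exact congrArg x (Fin.ext (by (try simp only []); (try simp only [Fin.val_succ, Fin.coe_castSucc]); omega))
        | exact congrArg₂ op rfl (congrArg x (Fin.ext (by (try simp only []); (try simp only [Fin.val_succ, Fin.coe_castSucc]); omega)))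
        | exact congrArg₂ op (congrArg x (Fin.ext (by (try simp only []); (try simp only [Fin.val_succ, Fin.coe_castSucc]); omega))) rfl
        | exact congrArg₂ op (congrArg x (Fin.ext (by (try simp only []); (try simp only [Fin.val_succ, Fin.coe_castSucc]); omega))) (congrArg x (Fin.ext (by (try simp only []); (try simp only [Fin.val_succ, Fin.coe_castSucc]); omega)))
        | exact (congrArg₂ op (congrArg x (Fin.ext (by (try simp only []); (try simp only [Fin.val_succ, Fin.coe_castSucc]); omega))) (congrArg x (Fin.ext (by (try simp only []); (try simp only [Fin.val_succ, Fin.coe_castSucc]); omega)))).trans (hidem _)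
        | exact (hidem _).symm.trans (congrArg₂ op (congrArg x (Fin.ext (by (try simp only []); (try simp only [Fin.val_succ, Fin.coe_castSucc]); omega))) (congrArg x (Fin.ext (by (try simp only []); (try simp only [Fin.val_succ, Fin.coe_castSucc]); omega))))
  have h1 : ∀ y : Q, d1 Q op (m+1) (j+1) (Finsupp.single (fun k : Fin (m+2) =>
        if h1 : (k : ℕ) + 1 = j then y
        else if h2 : (k : ℕ) + 1 ≤ j + 1 then x ⟨j - 1, by omega⟩
        else x ⟨(k : ℕ) - 1, by have := k.isLt; omega⟩) b) =
      Finsupp.single (fun k : Fin (m+1) =>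
        if (k : ℕ) + 1 = j then op y (x ⟨j - 1, by omega⟩)
        else if (k : ℕ) + 1 < j then x ⟨j - 1, by omega⟩ else x k) b := by
    intro y
    rw [d1_single]
    congr 1
    funext k
    simp only [Fin.coe_castSucc, Fin.val_succ, Fin.succ_mk, Fin.castSucc_mk]
    split_ifs <;>
      first
        | rfl
        | omega
        | exact hidem _
        | exact (hidem _).symm
        | exact congrArg x (Fin.ext (by (try simp only []); (try simp only [Fin.val_succ, Fin.coe_castSucc]); omega))
        | exact congrArg₂ op rfl (congrArg x (Fin.ext (by (try simp only []); (try simp only [Fin.val_succ, Fin.coe_castSucc]); omega)))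
        | exact congrArg₂ op (congrArg x (Fin.ext (by (try simp only []); (try simp only [Fin.val_succ, Fin.coe_castSucc]); omega))) rfl
        | exact congrArg₂ op (congrArg x (Fin.ext (by (try simp only []); (try simp only [Fin.val_succ, Fin.coe_castSucc]); omega))) (congrArg x (Fin.ext (by (try simp only []); (try simp only [Fin.val_succ, Fin.coe_castSucc]); omega)))
        | exact (congrArg₂ op (congrArg x (Fin.ext (by (try simp only []); (try simp only [Fin.val_succ, Fin.coe_castSucc]); omega))) (congrArg x (Fin.ext (by (try simp only []); (try simp only [Fin.val_succ, Fin.coe_castSucc]); omega)))).trans (hidem _)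
        | exact (hidem _).symm.trans (congrArg₂ op (congrArg x (Fin.ext (by (try simp only []); (try simp only [Fin.val_succ, Fin.coe_castSucc]); omega))) (congrArg x (Fin.ext (by (try simp only []); (try simp only [Fin.val_succ, Fin.coe_castSucc]); omega))))
  rw [Finset.sum_congr rfl fun y _ => h0 y, Finset.sum_congr rfl fun y _ => h1 y]
  exact (Function.Bijective.sum_comp (hinv (x ⟨j - 1, by omega⟩))
    (fun z => Finsupp.single (fun k : Fin (m+1) =>
      if (k : ℕ) + 1 = j then z
      else if (k : ℕ) + 1 < j then x ⟨j - 1, by omega⟩ else x k) b)).symm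

lemma caseA_hi0 {i : ℕ} (hi1 : j + 2 ≤ i) (hi2 : i ≤ m + 2) :
    d0 Q (m+1) i (Fnj Q (m+1) j (Finsupp.single x b)) =
      Fnj Q m j (d0 Q m (i-1) (Finsupp.single x b)) := by
  rw [Fnj_single (m+1) j hj1 (by omega) x b, map_sum, d0_single,
    Fnj_single m j hj1 hj2]
  refine Finset.sum_congr rfl fun y _ => ?_
  rw [d0_single]
  congr 1
  funext k
  simp only [Fin.coe_castSucc, Fin.val_succ, Fin.succ_mk, Fin.castSucc_mk]
  split_ifs <;>
    first
      | rfl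
      | omega
      | exact hidem _
      | exact (hidem _).symm
      | exact congrArg x (Fin.ext (by (try simp only []); (try simp only [Fin.val_succ, Fin.coe_castSucc]); omega))
      | exact congrArg₂ op rfl (congrArg x (Fin.ext (by (try simp only []); (try simp only [Fin.val_succ, Fin.coe_castSucc]); omega)))
      | exact congrArg₂ op (congrArg x (Fin.ext (by (try simp only []); (try simp only [Fin.val_succ, Fin.coe_castSucc]); omega))) rfl
      | exact congrArg₂ op (congrArg x (Fin.ext (by (try simp only []); (try simp only [Fin.val_succ, Fin.coe_castSucc]); omega))) (congrArg x (Fin.ext (by (try simp only []); (try simp only [Fin.val_succ, Fin.coe_castSucc]); omega)))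
      | exact (congrArg₂ op (congrArg x (Fin.ext (by (try simp only []); (try simp only [Fin.val_succ, Fin.coe_castSucc]); omega))) (congrArg x (Fin.ext (by (try simp only []); (try simp only [Fin.val_succ, Fin.coe_castSucc]); omega)))).trans (hidem _)
      | exact (hidem _).symm.trans (congrArg₂ op (congrArg x (Fin.ext (by (try simp only []); (try simp only [Fin.val_succ, Fin.coe_castSucc]); omega))) (congrArg x (Fin.ext (by (try simp only []); (try simp only [Fin.val_succ, Fin.coe_castSucc]); omega))))

lemma caseA_hi1 (hinv : ∀ c : Q, Function.Bijective (fun a => op a c))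
    {i : ℕ} (hi1 : j + 2 ≤ i) (hi2 : i ≤ m + 2) :
    d1 Q op (m+1) i (Fnj Q (m+1) j (Finsupp.single x b)) =
      Fnj Q m j (d1 Q op m (i-1) (Finsupp.single x b)) := by
  rw [Fnj_single (m+1) j hj1 (by omega) x b, map_sum, d1_single,
    Fnj_single m j hj1 hj2]
  refine Finset.sum_equiv (Equiv.ofBijective _ (hinv (x ⟨i - 2, by omega⟩)))
    (fun _ => by simp) (fun y _ => ?_)
  rw [d1_single]
  simp only [Equiv.ofBijective_apply]
  congr 1
  funext k
  simp only [Fin.coe_castSucc, Fin.val_succ, Fin.succ_mk, Fin.castSucc_mk]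
  split_ifs <;>
    first
      | rfl
      | omega
      | exact hidem _
      | exact (hidem _).symm
      | exact congrArg x (Fin.ext (by (try simp only []); (try simp only [Fin.val_succ, Fin.coe_castSucc]); omega))
      | exact congrArg₂ op rfl (congrArg x (Fin.ext (by (try simp only []); (try simp only [Fin.val_succ, Fin.coe_castSucc]); omega)))
      | exact congrArg₂ op (congrArg x (Fin.ext (by (try simp only []); (try simp only [Fin.val_succ, Fin.coe_castSucc]); omega))) rfl
      | exact congrArg₂ op (congrArg x (Fin.ext (by (try simp only []); (try simp only [Fin.val_succ, Fin.coe_castSucc]); omega))) (congrArg x (Fin.ext (by (try simp only []); (try simp only [Fin.val_succ, Fin.coe_castSucc]); omega)))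
      | exact (congrArg₂ op (congrArg x (Fin.ext (by (try simp only []); (try simp only [Fin.val_succ, Fin.coe_castSucc]); omega))) (congrArg x (Fin.ext (by (try simp only []); (try simp only [Fin.val_succ, Fin.coe_castSucc]); omega)))).trans (hidem _)
      | exact (hidem _).symm.trans (congrArg₂ op (congrArg x (Fin.ext (by (try simp only []); (try simp only [Fin.val_succ, Fin.coe_castSucc]); omega))) (congrArg x (Fin.ext (by (try simp only []); (try simp only [Fin.val_succ, Fin.coe_castSucc]); omega))))

lemma caseB_le {i : ℕ} (hij : i ≤ j) :
    Fnj Q m j (d0 Q m i (Finsupp.single x b)) =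
      Fnj Q m j (d1 Q op m i (Finsupp.single x b)) := by
  rw [d0_single, d1_single, Fnj_single m j hj1 hj2, Fnj_single m j hj1 hj2]
  refine Finset.sum_congr rfl fun y _ => ?_
  congr 1
  funext k
  simp only [Fin.coe_castSucc, Fin.val_succ, Fin.succ_mk, Fin.castSucc_mk]
  split_ifs <;>
    first
      | rfl
      | omega
      | exact hidem _
      | exact (hidem _).symm
      | exact congrArg x (Fin.ext (by (try simp only []); (try simp only [Fin.val_succ, Fin.coe_castSucc]); omega))
      | exact congrArg₂ op rfl (congrArg x (Fin.ext (by (try simp only []); (try simp only [Fin.val_succ, Fin.coe_castSucc]); omega)))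
      | exact congrArg₂ op (congrArg x (Fin.ext (by (try simp only []); (try simp only [Fin.val_succ, Fin.coe_castSucc]); omega))) rfl
      | exact congrArg₂ op (congrArg x (Fin.ext (by (try simp only []); (try simp only [Fin.val_succ, Fin.coe_castSucc]); omega))) (congrArg x (Fin.ext (by (try simp only []); (try simp only [Fin.val_succ, Fin.coe_castSucc]); omega)))
      | exact (congrArg₂ op (congrArg x (Fin.ext (by (try simp only []); (try simp only [Fin.val_succ, Fin.coe_castSucc]); omega))) (congrArg x (Fin.ext (by (try simp only []); (try simp only [Fin.val_succ, Fin.coe_castSucc]); omega)))).trans (hidem _)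
      | exact (hidem _).symm.trans (congrArg₂ op (congrArg x (Fin.ext (by (try simp only []); (try simp only [Fin.val_succ, Fin.coe_castSucc]); omega))) (congrArg x (Fin.ext (by (try simp only []); (try simp only [Fin.val_succ, Fin.coe_castSucc]); omega))))

end Cases


/-- **Statement 4.** Let `Q` be a finite quasigroup quandle, `n ≥ 2` and `1 ≤ j ≤ n-1`
(here `n = m+1`, so `1 ≤ j ≤ m`). Then
`∂_{n+1} ∘ F_n^j + F_{n-1}^j ∘ ∂_n = (-1)^j (f_r^j - f_s^{j-1})` as homomorphisms
`C_n^R(Q) → C_n^R(Q)`. -/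
theorem F_chain_homotopy
    (Q : Type) [Fintype Q] (op : Q → Q → Q)
    (hsd : ∀ a b c : Q, op (op a b) c = op (op a c) (op b c))
    (hinv : ∀ b : Q, Function.Bijective (fun a => op a b))
    (hidem : ∀ a : Q, op a a = a)
    (hlatin : ∀ a b : Q, ∃! x : Q, op a x = b)
    (m j : ℕ) (hj1 : 1 ≤ j) (hj2 : j ≤ m) :
    bdry Q op (m+1) ∘ₗ Fnj Q (m+1) j + Fnj Q m j ∘ₗ bdry Q op m
      = ((-1 : ℤ)^j) • (frj Q (m+1) j - fsj Q (m+1) (j-1)) := by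
  apply Finsupp.lhom_ext
  intro x b
  simp only [LinearMap.add_apply, LinearMap.coe_comp, Function.comp_apply,
    LinearMap.smul_apply, LinearMap.sub_apply]
  rw [bdry, bdry]
  simp only [LinearMap.sum_apply, LinearMap.smul_apply, LinearMap.sub_apply,
    map_sum, map_smul, map_sub]
  rw [show Finset.Icc 1 (m+1+1) = Finset.Ioc 0 (m+1+1) from Finset.Icc_add_one_left_eq_Ioc 0 (m+1+1),
      show Finset.Icc 1 (m+1) = Finset.Ioc 0 (m+1) from Finset.Icc_add_one_left_eq_Ioc 0 (m+1)]
  have split1 : ∑ i ∈ Finset.Ioc 0 (m+1+1), ((-1:ℤ)^i •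
        (d0 Q (m+1) i (Fnj Q (m+1) j (Finsupp.single x b))
          - d1 Q op (m+1) i (Fnj Q (m+1) j (Finsupp.single x b))))
      = (∑ i ∈ Finset.Ioc 0 (j-1), ((-1:ℤ)^i •
            (d0 Q (m+1) i (Fnj Q (m+1) j (Finsupp.single x b))
              - d1 Q op (m+1) i (Fnj Q (m+1) j (Finsupp.single x b)))))
        + ((-1:ℤ)^j • (d0 Q (m+1) j (Fnj Q (m+1) j (Finsupp.single x b))
              - d1 Q op (m+1) j (Fnj Q (m+1) j (Finsupp.single x b))))
        + ((-1:ℤ)^(j+1) • (d0 Q (m+1) (j+1) (Fnj Q (m+1) j (Finsupp.single x b))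
              - d1 Q op (m+1) (j+1) (Fnj Q (m+1) j (Finsupp.single x b))))
        + ∑ i ∈ Finset.Ioc (j+1) (m+1+1), ((-1:ℤ)^i •
            (d0 Q (m+1) i (Fnj Q (m+1) j (Finsupp.single x b))
              - d1 Q op (m+1) i (Fnj Q (m+1) j (Finsupp.single x b)))) := by
    rw [← Finset.sum_Ioc_consecutive _ (show (0:ℕ) ≤ j by omega) (show j ≤ m+1+1 by omega),
        ← Finset.sum_Ioc_consecutive _ (show (0:ℕ) ≤ j-1 by omega) (show j-1 ≤ j by omega),
        ← Finset.sum_Ioc_consecutive _ (show (j:ℕ) ≤ j+1 by omega) (show j+1 ≤ m+1+1 by omega)]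
    have h1 : Finset.Ioc (j-1) j = {j} := by ext a; simp only [Finset.mem_Ioc, Finset.mem_singleton]; omega
    have h2 : Finset.Ioc j (j+1) = {j+1} := by ext a; simp only [Finset.mem_Ioc, Finset.mem_singleton]; omega
    rw [h1, h2, Finset.sum_singleton, Finset.sum_singleton]
    abel
  have split2 : ∑ i ∈ Finset.Ioc 0 (m+1), ((-1:ℤ)^i •
        (Fnj Q m j (d0 Q m i (Finsupp.single x b))
          - Fnj Q m j (d1 Q op m i (Finsupp.single x b))))
      = (∑ i ∈ Finset.Ioc 0 j, ((-1:ℤ)^i •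
            (Fnj Q m j (d0 Q m i (Finsupp.single x b))
              - Fnj Q m j (d1 Q op m i (Finsupp.single x b)))))
        + ∑ i ∈ Finset.Ioc j (m+1), ((-1:ℤ)^i •
            (Fnj Q m j (d0 Q m i (Finsupp.single x b))
              - Fnj Q m j (d1 Q op m i (Finsupp.single x b)))) :=
    (Finset.sum_Ioc_consecutive _ (by omega) (by omega)).symm
  rw [split1, split2]
  have z1 : ∑ i ∈ Finset.Ioc 0 (j-1), ((-1:ℤ)^i •
        (d0 Q (m+1) i (Fnj Q (m+1) j (Finsupp.single x b))
          - d1 Q op (m+1) i (Fnj Q (m+1) j (Finsupp.single x b)))) = 0 :=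
    Finset.sum_eq_zero fun i hi => by
      rw [caseA_lt op hidem hj1 hj2 x b
        (show i < j by have := (Finset.mem_Ioc.mp hi).2; omega)]
      simp
  have t2 : d0 Q (m+1) j (Fnj Q (m+1) j (Finsupp.single x b))
        - d1 Q op (m+1) j (Fnj Q (m+1) j (Finsupp.single x b))
      = frj Q (m+1) j (Finsupp.single x b) - fsj Q (m+1) (j-1) (Finsupp.single x b) := by
    rw [caseA_j op hidem hj1 hj2 x b, caseA_j' op hidem hj1 hj2 x b hlatin]
  have z3 : d0 Q (m+1) (j+1) (Fnj Q (m+1) j (Finsupp.single x b))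
        - d1 Q op (m+1) (j+1) (Fnj Q (m+1) j (Finsupp.single x b)) = 0 := by
    rw [caseA_j1 op hidem hj1 hj2 x b hinv, sub_self]
  have t4 : ∑ i ∈ Finset.Ioc (j+1) (m+1+1), ((-1:ℤ)^i •
        (d0 Q (m+1) i (Fnj Q (m+1) j (Finsupp.single x b))
          - d1 Q op (m+1) i (Fnj Q (m+1) j (Finsupp.single x b))))
      = ∑ i ∈ Finset.Ioc j (m+1), ((-1:ℤ)^(i+1) •
          (Fnj Q m j (d0 Q m i (Finsupp.single x b))
            - Fnj Q m j (d1 Q op m i (Finsupp.single x b)))) := by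
    rw [show Finset.Ioc (j+1) (m+1+1) = (Finset.Ioc j (m+1)).map (addRightEmbedding 1) by
      rw [Finset.map_add_right_Ioc]]
    rw [Finset.sum_map]
    refine Finset.sum_congr rfl fun i hi => ?_
    have hmem := Finset.mem_Ioc.mp hi
    simp only [addRightEmbedding_apply]
    rw [caseA_hi0 op hidem hj1 hj2 x b (show j + 2 ≤ i + 1 by omega)
        (show i + 1 ≤ m + 2 by omega),
      caseA_hi1 op hidem hj1 hj2 x b hinv (show j + 2 ≤ i + 1 by omega)
        (show i + 1 ≤ m + 2 by omega)]
    simp only [Nat.add_sub_cancel]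
  have z5 : ∑ i ∈ Finset.Ioc 0 j, ((-1:ℤ)^i •
        (Fnj Q m j (d0 Q m i (Finsupp.single x b))
          - Fnj Q m j (d1 Q op m i (Finsupp.single x b)))) = 0 :=
    Finset.sum_eq_zero fun i hi => by
      rw [caseB_le op hidem hj1 hj2 x b (Finset.mem_Ioc.mp hi).2, sub_self, smul_zero]
  have cancel : ∑ i ∈ Finset.Ioc j (m+1), ((-1:ℤ)^(i+1) •
        (Fnj Q m j (d0 Q m i (Finsupp.single x b))
          - Fnj Q m j (d1 Q op m i (Finsupp.single x b))))
      + ∑ i ∈ Finset.Ioc j (m+1), ((-1:ℤ)^i •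
          (Fnj Q m j (d0 Q m i (Finsupp.single x b))
            - Fnj Q m j (d1 Q op m i (Finsupp.single x b)))) = 0 := by
    rw [← Finset.sum_add_distrib]
    refine Finset.sum_eq_zero fun i hi => ?_
    have hpow : ((-1:ℤ))^(i+1) = -(-1:ℤ)^i := by ring
    rw [hpow, neg_smul, neg_add_cancel]
  rw [z1, t2, z3, t4, z5, smul_zero, zero_add, add_zero, zero_add, add_assoc, cancel, add_zero]
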